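/- Let N : L(A) → L(B) be a CPTP map and N̂ : L(A) → L(B) a completely positive map, and let 0 < ε < 1/2. Assume that for every density operator ρ on A one has (1−ε)N(ρ) − ε·1_B/|B| ≤ N̂(ρ) ≤ (1+ε)N(ρ) + ε·1_B/|B| in the Loewner order. Then for every density operator ρ on A and every density operator ω on B, |F(N̂(ρ), ω) − F(N(ρ), ω)| ≤ (3/√2)·√ε. -/

import Mathlib

open scoped Kronecker ENNReal ComplexOrder
open Matrix MeasureTheory

noncomputable section
attribute [local instance] Classical.propDecidable

/-- The singular values of a square complex matrix. -/
def singularValues {m : Type*} [Fintype m] [DecidableEq m] (X : Matrix m m ℂ) : m → ℝ :=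
  fun i => Real.sqrt ((Matrix.posSemidef_conjTranspose_mul_self X).1.eigenvalues i)

/-- The Schatten `p`-norm of a square complex matrix (`p = ⊤` giving the operator norm). -/
def schattenNorm {m : Type*} [Fintype m] [DecidableEq m] (p : ℝ≥0∞) (X : Matrix m m ℂ) : ℝ :=
  if p = ⊤ then ⨆ i, singularValues X i
  else (∑ i, singularValues X i ^ p.toReal) ^ (1 / p.toReal)

/-- `Φ` has the Kraus decomposition given by the family `K`. -/
def HasKraus {a b : Type*} [Fintype a] [Fintype b] {s : ℕ}
    (Φ : Matrix a a ℂ → Matrix b b ℂ) (K : Fin s → Matrix b a ℂ) : Prop :=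
  ∀ X, Φ X = ∑ i, K i * X * (K i)ᴴ

/-- Completely positive map: admits some Kraus decomposition. -/
def IsCP {a b : Type*} [Fintype a] [Fintype b]
    (Φ : Matrix a a ℂ → Matrix b b ℂ) : Prop :=
  ∃ (s : ℕ) (K : Fin s → Matrix b a ℂ), HasKraus Φ K

/-- Trace preserving map. -/
def IsTP {a b : Type*} [Fintype a] [Fintype b]
    (Φ : Matrix a a ℂ → Matrix b b ℂ) : Prop :=
  ∀ X, (Φ X).trace = X.trace

/-- Completely positive and trace preserving map. -/
def IsCPTP {a b : Type*} [Fintype a] [Fintype b]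
    (Φ : Matrix a a ℂ → Matrix b b ℂ) : Prop :=
  IsCP Φ ∧ IsTP Φ

/-- The Kraus rank: minimal number of Kraus operators. -/
def krausRank {a b : Type*} [Fintype a] [Fintype b]
    (Φ : Matrix a a ℂ → Matrix b b ℂ) : ℕ :=
  sInf {s : ℕ | ∃ K : Fin s → Matrix b a ℂ, HasKraus Φ K}

/-- A density operator: positive semidefinite with trace one. -/
def IsDensity {a : Type*} [Fintype a] [DecidableEq a] (ρ : Matrix a a ℂ) : Prop :=
  ρ.PosSemidef ∧ ρ.trace = 1

/-- Loewner order. -/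
def loewnerLE {a : Type*} [Fintype a] (X Y : Matrix a a ℂ) : Prop :=
  (Y - X).PosSemidef

/-- von Neumann entropy. -/
def vonNeumannEntropy {a : Type*} [Fintype a] [DecidableEq a] (ρ : Matrix a a ℂ) : ℝ :=
  if h : ρ.IsHermitian then -∑ i, h.eigenvalues i * Real.log (h.eigenvalues i) else 0

/-- Rényi entropy of order `p ∈ (1,∞]`. -/
def renyiEntropy {a : Type*} [Fintype a] [DecidableEq a] (p : ℝ≥0∞) (ρ : Matrix a a ℂ) : ℝ :=
  if p = ⊤ then -Real.log (schattenNorm ⊤ ρ)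
  else -(p.toReal / (p.toReal - 1)) * Real.log (schattenNorm p ρ)

/-- The factor `p/(p-1)`, read as `1` for `p = ∞`. -/
def pFactor (p : ℝ≥0∞) : ℝ := if p = ⊤ then 1 else p.toReal / (p.toReal - 1)

/-- Square root of a positive semidefinite matrix (junk value otherwise). -/
def psdSqrt {a : Type*} [Fintype a] [DecidableEq a] (ρ : Matrix a a ℂ) : Matrix a a ℂ :=
  if h : ρ.PosSemidef then
    (h.1.eigenvectorUnitary : Matrix a a ℂ) * diagonal ((↑) ∘ Real.sqrt ∘ h.1.eigenvalues) *
      (star h.1.eigenvectorUnitary : Matrix a a ℂ) else 0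

/-- Fidelity `F(σ, ω) = ‖√σ √ω‖₁`. -/
def fidelity {a : Type*} [Fintype a] [DecidableEq a] (σ ω : Matrix a a ℂ) : ℝ :=
  schattenNorm 1 (psdSqrt σ * psdSqrt ω)

/-- Rank-one projection `|v⟩⟨v|`. -/
def projVec {a : Type*} (v : a → ℂ) : Matrix a a ℂ :=
  Matrix.of fun i j => v i * star (v j)

/-- Partial trace over the second tensor factor. -/
def ptraceSnd {b e : Type*} [Fintype e] (M : Matrix (b × e) (b × e) ℂ) : Matrix b b ℂ :=
  Matrix.of fun i j => ∑ k, M (i, k) (j, k)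

/-- Partial trace over the first tensor factor. -/
def ptraceFst {b e : Type*} [Fintype b] (M : Matrix (b × e) (b × e) ℂ) : Matrix e e ℂ :=
  Matrix.of fun k l => ∑ i, M (i, k) (i, l)

/-- The channel `ρ ↦ tr_E (V ρ V†)` associated to an isometry `V : A → B ⊗ E`. -/
def stineChan {a b e : Type*} [Fintype a] [Fintype b] [Fintype e]
    (V : Matrix (b × e) a ℂ) : Matrix a a ℂ → Matrix b b ℂ :=
  fun ρ => ptraceSnd (V * ρ * Vᴴ)

/-- The CP map `N_φ : ρ ↦ |E| tr_E ((1 ⊗ |φ⟩⟨φ|) V ρ V† (1 ⊗ |φ⟩⟨φ|))`. -/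
def stineChanPinned {a b e : Type*} [Fintype a] [Fintype b] [Fintype e] [DecidableEq b]
    (V : Matrix (b × e) a ℂ) (φ : e → ℂ) : Matrix a a ℂ → Matrix b b ℂ :=
  fun ρ => (Fintype.card e : ℂ) •
    ptraceSnd (((1 : Matrix b b ℂ) ⊗ₖ projVec φ) * (V * ρ * Vᴴ) * ((1 : Matrix b b ℂ) ⊗ₖ projVec φ))

/-- `⟨y| M |y⟩`. -/
def qForm {b : Type*} [Fintype b] (y : b → ℂ) (M : Matrix b b ℂ) : ℂ :=
  star y ⬝ᵥ M *ᵥ y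

/-- The uniform (Haar, rotation-invariant) probability measure on the unit sphere of `ℂ^s`. -/
def IsUniformOnSphere {s : ℕ} (μ : Measure (Fin s → ℂ)) : Prop :=
  IsProbabilityMeasure μ ∧
  μ {v : Fin s → ℂ | ∑ i, ‖v i‖ ^ 2 = 1}ᶜ = 0 ∧
  ∀ U ∈ Matrix.unitaryGroup (Fin s) ℂ, μ.map (fun v => U *ᵥ v) = μ

/-!
Write `F(σ, ω) = tr √(√ω σ √ω)`. The engine is an operator AM–GM inequality: for `A ≥ 0` and
any positive definite `G`, `2 tr √A ≤ tr (A G⁻¹) + tr G`. If `A ≤ s P + Q` with `P, Q ≥ 0`, taking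
`G = √s √P + c` gives `tr √A ≤ √s tr √P + (tr Q / c + |B| c) / 2`, and optimising `c` turns the
error into `√(|B| tr Q)`. Conjugating the two Loewner bounds by `√ω` puts them in this form with
`Q = (ε/|B|) ω`, so that `F(N̂ρ, ω) ≤ √(1+ε) F(Nρ, ω) + √ε` and
`√(1-ε) F(Nρ, ω) ≤ F(N̂ρ, ω) + √ε`. Since `F(Nρ, ω) ≤ 1`, both differences are at most
`ε + √ε ≤ (3/√2) √ε` for `ε < 1/2`.
-/

open scoped MatrixOrder

lemma mul_mul_inv_sqrt_mul_sqrt_add_le {s x c : ℝ} (hs : 0 ≤ s) (hx : 0 ≤ x) (hc : 0 ≤ c) :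
    s * x * (√s * √x + c)⁻¹ ≤ √s * √x := by
  have hsx : s * x = (√s * √x) * (√s * √x) := by
    rw [mul_mul_mul_comm, Real.mul_self_sqrt hs, Real.mul_self_sqrt hx]
  have hu : 0 ≤ √s * √x := by positivity
  rw [← div_eq_mul_inv]
  exact div_le_of_le_mul₀ (by positivity) hu (by rw [hsx]; nlinarith [mul_nonneg hu hc])

namespace Matrix

section
variable {n : Type*} [Fintype n]

lemma re_trace_nonneg {A : Matrix n n ℂ} (hA : 0 ≤ A) : 0 ≤ A.trace.re :=
  (Complex.nonneg_iff.mp hA.posSemidef.trace_nonneg).1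

lemma nonempty_of_trace_ne_zero {A : Matrix n n ℂ} (hA : A.trace ≠ 0) : Nonempty n := by
  by_contra h
  simp [trace, Finset.univ_eq_empty_iff.mpr (not_nonempty_iff.mp h)] at hA

end

variable {n : Type*} [Fintype n] [DecidableEq n]

lemma continuousOn_spectrum (A : Matrix n n ℂ) (f : ℝ → ℝ) : ContinuousOn f (spectrum ℝ A) :=
  A.finite_real_spectrum.continuousOn f

lemma re_trace_cfc {A : Matrix n n ℂ} (hA : A.IsHermitian) (f : ℝ → ℝ) :
    (cfc f A).trace.re = ∑ i, f (hA.eigenvalues i) := by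
  rw [hA.cfc_eq, IsHermitian.cfc, Unitary.conjStarAlgAut_apply, trace_mul_cycle,
    Unitary.coe_star_mul_self, one_mul, trace_diagonal, Complex.re_sum]
  rfl

lemma sqrt_eq_cfc_real_sqrt {A : Matrix n n ℂ} (hA : 0 ≤ A) : CFC.sqrt A = cfc Real.sqrt A := by
  rw [CFC.sqrt_eq_real_sqrt A hA, cfcₙ_eq_cfc]

lemma re_trace_sqrt {A : Matrix n n ℂ} (hA : 0 ≤ A) :
    (CFC.sqrt A).trace.re = ∑ i, √(hA.posSemidef.1.eigenvalues i) := by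
  rw [sqrt_eq_cfc_real_sqrt hA, re_trace_cfc]

lemma sqrt_smul {A : Matrix n n ℂ} (hA : 0 ≤ A) {r : ℝ} (hr : 0 ≤ r) :
    CFC.sqrt (r • A) = √r • CFC.sqrt A := by
  rw [CFC.sqrt_eq_iff _ _ (smul_nonneg hr hA) (smul_nonneg (Real.sqrt_nonneg r)
    (CFC.sqrt_nonneg A)), smul_mul_smul_comm, Real.mul_self_sqrt hr, CFC.sqrt_mul_sqrt_self A]

lemma re_trace_mul_nonneg {A B : Matrix n n ℂ} (hA : 0 ≤ A) (hB : 0 ≤ B) :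
    0 ≤ (A * B).trace.re := by
  have h := re_trace_nonneg (conjugate_nonneg_of_nonneg hB (CFC.sqrt_nonneg A))
  rwa [trace_mul_cycle, CFC.sqrt_mul_sqrt_self A] at h

/-- Expand `0 ≤ tr (Xᴴ X)` for `X = g(B)^{-1/2} √A - g(B)^{1/2}`. -/
lemma two_mul_re_trace_sqrt_le {A B : Matrix n n ℂ} (hA : 0 ≤ A) (hB : IsSelfAdjoint B)
    {g : ℝ → ℝ} (hg : ∀ x ∈ spectrum ℝ B, 0 < g x) :
    2 * (CFC.sqrt A).trace.re ≤
      (A * cfc (fun x => (g x)⁻¹) B).trace.re + (cfc g B).trace.re := by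
  have hc := continuousOn_spectrum B
  set S := CFC.sqrt A
  set T := cfc (fun x => (√(g x))⁻¹) B
  set R := cfc (fun x => √(g x)) B
  have hTR : T * R = 1 := by
    rw [← cfc_mul _ _ _ (hc _) (hc _), ← cfc_const_one ℝ B]
    exact cfc_congr fun x hx => inv_mul_cancel₀ (Real.sqrt_pos.mpr (hg x hx)).ne'
  have hRT : R * T = 1 := mul_eq_one_comm.mp hTR
  have hTT : T * T = cfc (fun x => (g x)⁻¹) B := by
    rw [← cfc_mul _ _ _ (hc _) (hc _)]
    exact cfc_congr fun x hx => by rw [← mul_inv, Real.mul_self_sqrt (hg x hx).le]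
  have hRR : R * R = cfc g B := by
    rw [← cfc_mul _ _ _ (hc _) (hc _)]
    exact cfc_congr fun x hx => Real.mul_self_sqrt (hg x hx).le
  have hS : star S = S := (CFC.sqrt_nonneg A).isSelfAdjoint.star_eq
  have hT : star T = T := (cfc_predicate _ B : IsSelfAdjoint T).star_eq
  have hR : star R = R := (cfc_predicate _ B : IsSelfAdjoint R).star_eq
  have hexpand : star (T * S - R) * (T * S - R) = S * (T * T) * S - (S + S) + R * R := by
    simp only [star_sub, star_mul, hS, hT, hR]
    calc (S * T - R) * (T * S - R) = S * (T * T) * S - S * (T * R) - (R * T) * S + R * R := by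
          noncomm_ring
      _ = _ := by rw [hTR, hRT]; noncomm_ring
  have h := re_trace_nonneg (star_mul_self_nonneg (T * S - R))
  rw [hexpand, trace_add, trace_sub, trace_add, trace_mul_cycle, CFC.sqrt_mul_sqrt_self A,
    hTT, hRR] at h
  simp only [Complex.add_re, Complex.sub_re] at h
  linarith

/-- AM–GM with `g(P) = √s √P + c`, for which `s P g(P)⁻¹ ≤ √s √P` and `g(P)⁻¹ ≤ c⁻¹`. -/
lemma two_mul_re_trace_sqrt_le_of_le {A P Q : Matrix n n ℂ} (hA : 0 ≤ A) (hP : 0 ≤ P)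
    (hQ : 0 ≤ Q) {s c : ℝ} (hs : 0 ≤ s) (hc : 0 < c) (h : A ≤ s • P + Q) :
    2 * (CFC.sqrt A).trace.re ≤
      2 * (√s * (CFC.sqrt P).trace.re) + Q.trace.re / c + Fintype.card n * c := by
  have hcont := continuousOn_spectrum P
  have hPh : P.IsHermitian := hP.posSemidef.1
  set g : ℝ → ℝ := fun x => √s * √x + c
  have hg : ∀ x, 0 < g x := fun x => by positivity
  set G := cfc (fun x => (g x)⁻¹) P
  have hG : 0 ≤ G := cfc_nonneg fun x _ => (inv_pos.mpr (hg x)).le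
  have hAG : (A * G).trace.re ≤ (s • P * G).trace.re + (Q * G).trace.re := by
    have := re_trace_mul_nonneg (sub_nonneg.mpr h) hG
    rw [sub_mul, add_mul, trace_sub, trace_add, Complex.sub_re, Complex.add_re] at this
    linarith
  have hQG : (Q * G).trace.re ≤ Q.trace.re / c := by
    have hGle : 0 ≤ cfc (fun x => c⁻¹ - (g x)⁻¹) P :=
      cfc_nonneg fun x _ => sub_nonneg.mpr (inv_anti₀ hc (le_add_of_nonneg_left (by positivity)))
    have := re_trace_mul_nonneg hQ hGle
    rw [cfc_sub _ _ _ (hcont _) (hcont _), cfc_const c⁻¹ P, mul_sub, ← Algebra.commutes,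
      ← Algebra.smul_def, trace_sub, trace_smul, Complex.sub_re, Complex.smul_re,
      smul_eq_mul] at this
    rw [div_eq_inv_mul]
    linarith
  have hPG : s • P * G = cfc (fun x => s * x * (g x)⁻¹) P := by
    rw [cfc_mul (fun x => s * x) _ _ (hcont _) (hcont _), cfc_const_mul_id s P]
  have hsum : (s • P * G).trace.re + (cfc g P).trace.re ≤
      2 * (√s * (CFC.sqrt P).trace.re) + Fintype.card n * c := by
    calc (s • P * G).trace.re + (cfc g P).trace.re
        = ∑ i, (s * hPh.eigenvalues i * (g (hPh.eigenvalues i))⁻¹ + g (hPh.eigenvalues i)) := by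
          rw [hPG, re_trace_cfc hPh, re_trace_cfc hPh, ← Finset.sum_add_distrib]
      _ ≤ ∑ i, (2 * (√s * √(hPh.eigenvalues i)) + c) := by
          refine Finset.sum_le_sum fun i _ => ?_
          have := mul_mul_inv_sqrt_mul_sqrt_add_le hs (hP.posSemidef.eigenvalues_nonneg i) hc.le
          linarith
      _ = _ := by
          rw [re_trace_sqrt hP, Finset.sum_add_distrib, Finset.mul_sum, Finset.mul_sum,
            Finset.sum_const, Finset.card_univ, nsmul_eq_mul]
  linarith [two_mul_re_trace_sqrt_le hA hPh (g := g) fun x _ => hg x]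

lemma re_trace_sqrt_le_of_le {A P Q : Matrix n n ℂ} (hA : 0 ≤ A) (hP : 0 ≤ P) (hQ : 0 ≤ Q)
    (hQtr : 0 < Q.trace.re) {s : ℝ} (hs : 0 ≤ s) (h : A ≤ s • P + Q) :
    (CFC.sqrt A).trace.re ≤ √s * (CFC.sqrt P).trace.re + √(Fintype.card n * Q.trace.re) := by
  have : Nonempty n := nonempty_of_trace_ne_zero (A := Q) fun h0 => by simp [h0] at hQtr
  have hn : (0 : ℝ) < Fintype.card n := mod_cast Fintype.card_pos
  set q := Q.trace.re
  set m : ℝ := ((Fintype.card n : ℕ) : ℝ)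
  set r := √(m * q)
  have hr : r * r = m * q := Real.mul_self_sqrt (by positivity)
  have hr0 : 0 < r := Real.sqrt_pos.mpr (by positivity)
  -- `c = r / m` minimises `q / c + m * c`
  have hbal : q / (r / m) + m * (r / m) = 2 * r := by
    field_simp
    linarith
  linarith [two_mul_re_trace_sqrt_le_of_le hA hP hQ hs (div_pos hr0 hn) h]

/-- AM–GM with `g(ω) = ω + δ`, where `√ω (ω + δ)⁻¹ √ω ≤ 1`, then `δ → 0`; the regularisation is
needed because `ω` may be singular. -/
lemma re_trace_sqrt_conj_le {σ ω : Matrix n n ℂ} (hσ : 0 ≤ σ) (hω : 0 ≤ ω) :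
    (CFC.sqrt (CFC.sqrt ω * σ * CFC.sqrt ω)).trace.re ≤ (σ.trace.re + ω.trace.re) / 2 := by
  have hcont := continuousOn_spectrum ω
  have hM : 0 ≤ CFC.sqrt ω * σ * CFC.sqrt ω := conjugate_nonneg_of_nonneg hσ (CFC.sqrt_nonneg ω)
  have hδ : ∀ δ > 0, (CFC.sqrt (CFC.sqrt ω * σ * CFC.sqrt ω)).trace.re ≤
      (σ.trace.re + ω.trace.re) / 2 + Fintype.card n * δ / 2 := by
    intro δ hδ
    have hspec : ∀ x ∈ spectrum ℝ ω, 0 < x + δ := fun x hx =>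
      add_pos_of_nonneg_of_pos (spectrum_nonneg_of_nonneg hω hx) hδ
    have hconj : CFC.sqrt ω * cfc (fun x => (x + δ)⁻¹) ω * CFC.sqrt ω ≤ 1 := by
      rw [sqrt_eq_cfc_real_sqrt hω, ← cfc_mul _ _ _ (hcont _) (hcont _),
        ← cfc_mul _ _ _ (hcont _) (hcont _), ← cfc_const_one ℝ ω]
      refine cfc_mono (fun x hx => ?_) (hcont _) (hcont _)
      rw [mul_right_comm, Real.mul_self_sqrt (spectrum_nonneg_of_nonneg hω hx),
        mul_inv_le_iff₀ (hspec x hx), one_mul]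
      linarith
    have hσG := re_trace_mul_nonneg hσ (sub_nonneg.mpr hconj)
    rw [mul_sub, mul_one, trace_sub, Complex.sub_re, ← mul_assoc, ← mul_assoc, trace_mul_cycle,
      ← mul_assoc] at hσG
    have hG : (cfc (fun x => x + δ) ω).trace.re = ω.trace.re + Fintype.card n * δ := by
      rw [cfc_add _ _ _ (hcont _) (hcont _), cfc_id' ℝ ω, cfc_const δ ω,
        Algebra.algebraMap_eq_smul_one, trace_add, trace_smul, trace_one, Complex.add_re,
        Complex.smul_re, smul_eq_mul, Complex.natCast_re, mul_comm]
    linarith [two_mul_re_trace_sqrt_le hM hω.isSelfAdjoint hspec]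
  refine le_of_forall_pos_le_add fun e he => ?_
  have hn : (0 : ℝ) < Fintype.card n + 1 := by positivity
  refine (hδ (e / (Fintype.card n + 1)) (by positivity)).trans ?_
  have : (Fintype.card n : ℝ) * (e / (Fintype.card n + 1)) ≤ e := by
    rw [mul_div_assoc', div_le_iff₀ hn]
    nlinarith
  linarith

lemma conj_sqrt_le_conj_add_smul {X Y ω : Matrix n n ℂ} (hω : 0 ≤ ω) {t : ℝ}
    (h : X ≤ Y + t • 1) :
    CFC.sqrt ω * X * CFC.sqrt ω ≤ CFC.sqrt ω * Y * CFC.sqrt ω + t • ω := by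
  have := conjugate_le_conjugate_of_nonneg h (CFC.sqrt_nonneg ω)
  rwa [mul_add, add_mul, mul_smul_comm, smul_mul_assoc, mul_one, CFC.sqrt_mul_sqrt_self ω] at this

end Matrix

section
variable {n : Type*} [Fintype n] [DecidableEq n]

lemma sum_singularValues (X : Matrix n n ℂ) :
    ∑ i, singularValues X i = (CFC.sqrt (Xᴴ * X)).trace.re :=
  (re_trace_sqrt (posSemidef_conjTranspose_mul_self X).nonneg).symm

lemma psdSqrt_eq_sqrt {A : Matrix n n ℂ} (hA : 0 ≤ A) : psdSqrt A = CFC.sqrt A := by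
  rw [psdSqrt, dif_pos hA.posSemidef, sqrt_eq_cfc_real_sqrt hA, hA.posSemidef.1.cfc_eq,
    IsHermitian.cfc, Unitary.conjStarAlgAut_apply]
  rfl

lemma fidelity_eq_re_trace_sqrt {σ ω : Matrix n n ℂ} (hσ : 0 ≤ σ) (hω : 0 ≤ ω) :
    fidelity σ ω = (CFC.sqrt (CFC.sqrt ω * σ * CFC.sqrt ω)).trace.re := by
  have hS : (CFC.sqrt σ)ᴴ = CFC.sqrt σ := (CFC.sqrt_nonneg σ).isSelfAdjoint.star_eq
  have hW : (CFC.sqrt ω)ᴴ = CFC.sqrt ω := (CFC.sqrt_nonneg ω).isSelfAdjoint.star_eq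
  simp only [fidelity, schattenNorm, ENNReal.one_ne_top, if_false, ENNReal.toReal_one,
    Real.rpow_one, div_one]
  rw [sum_singularValues, psdSqrt_eq_sqrt hσ, psdSqrt_eq_sqrt hω, conjTranspose_mul, hS, hW,
    mul_assoc, ← mul_assoc (CFC.sqrt σ), CFC.sqrt_mul_sqrt_self σ, ← mul_assoc]

lemma fidelity_nonneg {σ ω : Matrix n n ℂ} (hσ : 0 ≤ σ) (hω : 0 ≤ ω) : 0 ≤ fidelity σ ω := by
  rw [fidelity_eq_re_trace_sqrt hσ hω]
  exact re_trace_nonneg (CFC.sqrt_nonneg _)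

lemma fidelity_le_one {σ ω : Matrix n n ℂ} (hσ : IsDensity σ) (hω : IsDensity ω) :
    fidelity σ ω ≤ 1 := by
  have h := re_trace_sqrt_conj_le hσ.1.nonneg hω.1.nonneg
  rw [hσ.2, hω.2, Complex.one_re] at h
  rw [fidelity_eq_re_trace_sqrt hσ.1.nonneg hω.1.nonneg]
  linarith

lemma fidelity_smul_left {σ ω : Matrix n n ℂ} (hσ : 0 ≤ σ) (hω : 0 ≤ ω) {r : ℝ} (hr : 0 ≤ r) :
    fidelity (r • σ) ω = √r * fidelity σ ω := by
  rw [fidelity_eq_re_trace_sqrt (smul_nonneg hr hσ) hω, fidelity_eq_re_trace_sqrt hσ hω,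
    mul_smul_comm, smul_mul_assoc,
    sqrt_smul (conjugate_nonneg_of_nonneg hσ (CFC.sqrt_nonneg ω)) hr, trace_smul,
    Complex.smul_re, smul_eq_mul]

lemma fidelity_le_of_le_smul_add_smul_one {σ τ ω : Matrix n n ℂ} (hσ : 0 ≤ σ) (hτ : 0 ≤ τ)
    (hω : IsDensity ω) {s t : ℝ} (hs : 0 ≤ s) (ht : 0 < t) (h : τ ≤ s • σ + t • 1) :
    fidelity τ ω ≤ √s * fidelity σ ω + √(Fintype.card n * t) := by
  have hω0 := hω.1.nonneg
  have hQtr : (t • ω).trace.re = t := by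
    rw [trace_smul, hω.2, Complex.smul_re, Complex.one_re, smul_eq_mul, mul_one]
  have hconj := conj_sqrt_le_conj_add_smul hω0 h
  rw [mul_smul_comm, smul_mul_assoc] at hconj
  have := re_trace_sqrt_le_of_le (conjugate_nonneg_of_nonneg hτ (CFC.sqrt_nonneg ω))
    (conjugate_nonneg_of_nonneg hσ (CFC.sqrt_nonneg ω)) (smul_nonneg ht.le hω0)
    (by rwa [hQtr]) hs hconj
  rwa [fidelity_eq_re_trace_sqrt hτ hω0, fidelity_eq_re_trace_sqrt hσ hω0, ← hQtr]

end

lemma IsCP.posSemidef {a b : Type*} [Fintype a] [Fintype b] {Φ : Matrix a a ℂ → Matrix b b ℂ}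
    (hΦ : IsCP Φ) {ρ : Matrix a a ℂ} (hρ : ρ.PosSemidef) : (Φ ρ).PosSemidef := by
  obtain ⟨s, K, hK⟩ := hΦ
  rw [hK]
  exact Matrix.posSemidef_sum _ fun i _ => hρ.mul_mul_conjTranspose_same (K i)

lemma add_sqrt_le_three_div_sqrt_two_mul_sqrt {ε : ℝ} (hε0 : 0 < ε) (hε1 : ε < 1 / 2) :
    ε + √ε ≤ 3 / √2 * √ε := by
  have ht : √ε * √ε = ε := Real.mul_self_sqrt hε0.le
  have hu : √2 * √2 = 2 := Real.mul_self_sqrt zero_le_two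
  have hut : √2 * √ε < 1 := by
    rw [← Real.sqrt_mul zero_le_two, Real.sqrt_lt' one_pos]
    linarith
  have hu0 : 0 < √2 := by positivity
  rw [div_mul_eq_mul_div, le_div_iff₀ hu0]
  nlinarith [Real.sqrt_nonneg ε]

lemma abs_sub_le_of_sqrt_bounds {F Fh ε : ℝ} (hF0 : 0 ≤ F) (hF1 : F ≤ 1) (hε0 : 0 < ε)
    (hε1 : ε < 1 / 2) (hup : Fh ≤ √(1 + ε) * F + √ε) (hlo : √(1 - ε) * F ≤ Fh + √ε) :
    |Fh - F| ≤ 3 / √2 * √ε := by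
  have h1 : √(1 + ε) ≤ 1 + ε := Real.sqrt_le_iff.mpr ⟨by linarith, by nlinarith⟩
  have h2 : 1 - ε ≤ √(1 - ε) := (Real.le_sqrt (by linarith) (by linarith)).mpr (by nlinarith)
  refine abs_sub_le_iff.mpr ⟨?_, ?_⟩ <;>
    nlinarith [add_sqrt_le_three_div_sqrt_two_mul_sqrt hε0 hε1]

/-- output-fidelity approximation from the two-sided Loewner bound. -/
theorem stmt16 (a b : ℕ)
    (N Nh : Matrix (Fin a) (Fin a) ℂ → Matrix (Fin b) (Fin b) ℂ)
    (hN : IsCPTP N) (hNh : IsCP Nh)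
    (ε : ℝ) (hε0 : 0 < ε) (hε1 : ε < 1 / 2)
    (happrox : ∀ ρ : Matrix (Fin a) (Fin a) ℂ, IsDensity ρ →
      loewnerLE (((1 - ε : ℝ) : ℂ) • N ρ - ((ε : ℂ) / b) • 1) (Nh ρ) ∧
      loewnerLE (Nh ρ) (((1 + ε : ℝ) : ℂ) • N ρ + ((ε : ℂ) / b) • 1)) :
    ∀ ρ : Matrix (Fin a) (Fin a) ℂ, IsDensity ρ →
      ∀ ω : Matrix (Fin b) (Fin b) ℂ, IsDensity ω →
        |fidelity (Nh ρ) ω - fidelity (N ρ) ω| ≤ (3 / Real.sqrt 2) * Real.sqrt ε := by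
  intro ρ hρ ω hω
  have hσ : 0 ≤ N ρ := (hN.1.posSemidef hρ.1).nonneg
  have hσh : 0 ≤ Nh ρ := (hNh.posSemidef hρ.1).nonneg
  have : Nonempty (Fin b) := nonempty_of_trace_ne_zero (A := ω) (by simp [hω.2])
  have hb : (0 : ℝ) < b := mod_cast Fin.pos_iff_nonempty.mpr this
  have herr : √((Fintype.card (Fin b) : ℝ) * (ε / b)) = √ε := by
    rw [Fintype.card_fin, mul_div_cancel₀ _ hb.ne']
  obtain ⟨hlo, hup⟩ := happrox ρ hρ
  rw [show (ε : ℂ) / b = ((ε / b : ℝ) : ℂ) by push_cast; rfl, Complex.coe_smul,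
    Complex.coe_smul] at hlo hup
  have hupper := fidelity_le_of_le_smul_add_smul_one hσ hσh hω (by linarith) (by positivity) hup
  have hlower := fidelity_le_of_le_smul_add_smul_one (s := 1) (t := ε / b) hσh
    (smul_nonneg (by linarith : (0 : ℝ) ≤ 1 - ε) hσ) hω zero_le_one (by positivity)
    (by rwa [one_smul, ← sub_le_iff_le_add])
  rw [fidelity_smul_left hσ hω.1.nonneg (by linarith), Real.sqrt_one, one_mul] at hlower
  rw [herr] at hupper hlower
  exact abs_sub_le_of_sqrt_bounds (fidelity_nonneg hσ hω.1.nonneg) (fidelity_le_one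
    ⟨hσ.posSemidef, by rw [hN.2, hρ.2]⟩ hω) hε0 hε1 hupper hlower
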